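/- Let τ = lσ be a nonempty finite sequence of distinct natural numbers with first letter l, and let k be a natural number not occurring in τ. If pix(kτ) = 0, then lec(kτ) = 1 + lec(kσ), where kτ and kσ denote the sequences τ and σ with k prepended. -/

import Mathlib

namespace PaperStats

/-- `des w` is the number of descents of the word `w` (0-indexed positions `i`
with `w(i) > w(i+1)`). -/
def des (w : List ℕ) : ℕ :=
  ((Finset.range (w.length - 1)).filter fun i => w.getD (i + 1) 0 < w.getD i 0).card

/-- `inv w` is the number of inversions of the word `w`: pairs of positions
`i < j` with `w(i) > w(j)`. -/
def inv (w : List ℕ) : ℕ :=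
  ((Finset.range w.length ×ˢ Finset.range w.length).filter
    fun p => p.1 < p.2 ∧ w.getD p.2 0 < w.getD p.1 0).card

/-- An inversion `(i,j)` of `w` is admissible if either `w(j) < w(j+1)`
(`j` is not the last position and is followed by an ascent), or there is a
position `k` strictly between `i` and `j` with `w(j) > w(k)`. -/
def IsAdmissible (w : List ℕ) (i j : ℕ) : Prop :=
  (j + 1 < w.length ∧ w.getD j 0 < w.getD (j + 1) 0) ∨
    ∃ k, i < k ∧ k < j ∧ w.getD k 0 < w.getD j 0

instance (w : List ℕ) (i j : ℕ) : Decidable (IsAdmissible w i j) :=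
  decidable_of_iff ((j + 1 < w.length ∧ w.getD j 0 < w.getD (j + 1) 0) ∨
      ∃ k ∈ Finset.Ioo i j, w.getD k 0 < w.getD j 0) (by
    unfold IsAdmissible
    simp only [Finset.mem_Ioo, and_assoc])

/-- `ai w` is the number of admissible inversions of `w`. -/
def ai (w : List ℕ) : ℕ :=
  ((Finset.range w.length ×ˢ Finset.range w.length).filter
    fun p => p.1 < p.2 ∧ w.getD p.2 0 < w.getD p.1 0 ∧ IsAdmissible w p.1 p.2).card

/-- `aid w = ai w + des w`. -/
def aid (w : List ℕ) : ℕ := ai w + des w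

/-- The statistic `aix`, defined recursively: `aix ∅ = 0`; writing a nonempty
word as `π = α m β`, where `m` is the smallest letter and `α` is the maximal
prefix not containing `m`, one has `aix π = 1 + aix β` if `α = ∅`,
`aix π = 0` if `β = ∅` (and `α ≠ ∅`), and `aix π = aix α` otherwise. -/
def aix : List ℕ → ℕ
  | [] => 0
  | x :: xs =>
    if (x :: xs).takeWhile (fun a => decide (a ≠ xs.foldr min x)) = [] then
      1 + aix (((x :: xs).dropWhile (fun a => decide (a ≠ xs.foldr min x))).tail)
    else if ((x :: xs).dropWhile (fun a => decide (a ≠ xs.foldr min x))).tail = [] then 0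
    else aix ((x :: xs).takeWhile (fun a => decide (a ≠ xs.foldr min x)))
termination_by w => w.length
decreasing_by
  · simp only [List.foldr_subtype, List.unattach_attach]
    have h1 := (List.dropWhile_sublist (l := x :: xs) (fun a => decide (a ≠ xs.foldr min x))).length_le
    have h2 := List.length_tail (l := (x :: xs).dropWhile (fun a => decide (a ≠ xs.foldr min x)))
    simp only [List.length_cons] at *
    omega
  · rename_i hα hβ
    simp only [List.foldr_subtype, List.unattach_attach] at hα hβ ⊢
    have h0 : ((x :: xs).takeWhile (fun a => decide (a ≠ xs.foldr min x))) ++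
        ((x :: xs).dropWhile (fun a => decide (a ≠ xs.foldr min x))) = x :: xs :=
      List.takeWhile_append_dropWhile ..
    have h1 : ((x :: xs).dropWhile (fun a => decide (a ≠ xs.foldr min x))) ≠ [] := by
      intro h
      apply hβ
      rw [h]
      rfl
    have h2 := congrArg List.length h0
    simp only [List.length_append, List.length_cons] at h2
    have h3 : 0 < ((x :: xs).dropWhile (fun a => decide (a ≠ xs.foldr min x))).length :=
      List.length_pos_iff.mpr h1
    simp only [List.length_cons]
    omega

/-- The map `f(k,τ)`: with `m` the smallest letter of `τ` together with `k`
(`k` not occurring in `τ`), and `τ = α m β` with `α` the maximal prefix of `τ`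
avoiding `m`: `f(k,∅) = k`; `f(k,τ) = kτ` if `k = m`; and for `k > m`,
`f(k,τ) = f(k,β) m` if `α = ∅`, `f(k,τ) = k m α` if `β = ∅`, and
`f(k,τ) = f(k,α) m β` otherwise. -/
def fkt (k : ℕ) : List ℕ → List ℕ
  | [] => [k]
  | x :: xs =>
    if k < xs.foldr min x then k :: x :: xs
    else if (x :: xs).takeWhile (fun a => decide (a ≠ xs.foldr min x)) = [] then
      fkt k (((x :: xs).dropWhile (fun a => decide (a ≠ xs.foldr min x))).tail) ++
        [xs.foldr min x]
    else if ((x :: xs).dropWhile (fun a => decide (a ≠ xs.foldr min x))).tail = [] then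
      k :: xs.foldr min x :: ((x :: xs).takeWhile (fun a => decide (a ≠ xs.foldr min x)))
    else
      fkt k ((x :: xs).takeWhile (fun a => decide (a ≠ xs.foldr min x))) ++
        xs.foldr min x :: ((x :: xs).dropWhile (fun a => decide (a ≠ xs.foldr min x))).tail
termination_by w => w.length
decreasing_by
  · simp only [List.foldr_subtype, List.unattach_attach]
    have h1 := (List.dropWhile_sublist (l := x :: xs) (fun a => decide (a ≠ xs.foldr min x))).length_le
    have h2 := List.length_tail (l := (x :: xs).dropWhile (fun a => decide (a ≠ xs.foldr min x)))
    simp only [List.length_cons] at *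
    omega
  · rename_i hk hα hβ
    simp only [List.foldr_subtype, List.unattach_attach] at hk hα hβ ⊢
    have h0 : ((x :: xs).takeWhile (fun a => decide (a ≠ xs.foldr min x))) ++
        ((x :: xs).dropWhile (fun a => decide (a ≠ xs.foldr min x))) = x :: xs :=
      List.takeWhile_append_dropWhile ..
    have h1 : ((x :: xs).dropWhile (fun a => decide (a ≠ xs.foldr min x))) ≠ [] := by
      intro h
      apply hβ
      rw [h]
      rfl
    have h2 := congrArg List.length h0
    simp only [List.length_append, List.length_cons] at h2
    have h3 : 0 < ((x :: xs).dropWhile (fun a => decide (a ≠ xs.foldr min x))).length :=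
      List.length_pos_iff.mpr h1
    simp only [List.length_cons]
    omega

/-- `ini w` is the first letter of `w`. -/
def ini (w : List ℕ) : ℕ := w.headD 0

/-- The word of a permutation `π ∈ S_n`, namely `π(1) π(2) … π(n)`
(with values in `{1, …, n}`). -/
def permList {n : ℕ} (π : Equiv.Perm (Fin n)) : List ℕ :=
  List.ofFn fun i => (π i : ℕ) + 1

/-- The bijection `φ`: `φ(π) = f(π(1), f(π(2), ⋯ f(π(n), ∅) ⋯ ))`. -/
def phiW (w : List ℕ) : List ℕ := w.foldr fkt []

/-- Helper: `decRun l` splits `l` into its maximal weakly decreasing prefix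
and the rest. -/
def decRun : List ℕ → List ℕ × List ℕ
  | [] => ([], [])
  | [x] => ([x], [])
  | x :: y :: rest =>
    if y ≤ x then ((x :: (decRun (y :: rest)).1), (decRun (y :: rest)).2)
    else ([x], y :: rest)

theorem decRun_append : ∀ l : List ℕ, (decRun l).1 ++ (decRun l).2 = l
  | [] => rfl
  | [x] => rfl
  | x :: y :: rest => by
    rw [decRun]
    split
    · simpa using decRun_append (y :: rest)
    · rfl

/-- Helper computing the hook factorization of a word from its reversal: the
rightmost hook of the word starts at its rightmost descent top, i.e. it is
obtained by extending the maximal weakly decreasing prefix of the reversed word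
by one more letter; the process is repeated on what remains, and when no
letters usable for a hook remain the word left over is the increasing part
`π₀`. The result is `(π₀, [π₁, …, π_k])`. -/
def hookRev (r : List ℕ) : List ℕ × List (List ℕ) :=
  match h : (decRun r).2 with
  | [] => (r.reverse, [])
  | z :: rest =>
    ((hookRev rest).1, (hookRev rest).2 ++ [z :: (decRun r).1.reverse])
termination_by r.length
decreasing_by
  have h2 := congrArg List.length (decRun_append r)
  rw [h] at h2
  simp only [List.length_append, List.length_cons] at h2
  omega

/-- The hook factorization `(π₀, [π₁, …, π_k])` of a word
`w = π₀ π₁ ⋯ π_k`, where `π₀` is increasing and each `π_i`, `i ≥ 1`, is a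
hook. -/
def hookSplit (w : List ℕ) : List ℕ × List (List ℕ) := hookRev w.reverse

/-- `pix w` is the length of the initial increasing factor `π₀` in the hook
factorization of `w`. -/
def pix (w : List ℕ) : ℕ := (hookSplit w).1.length

/-- `lec w` is the sum of the numbers of inversions of the hooks in the hook
factorization of `w`. -/
def lec (w : List ℕ) : ℕ := ((hookSplit w).2.map inv).sum

/-- A word `w(1) … w(r)` with `r ≥ 2` is a hook if
`w(1) > w(2) ≤ w(3) ≤ ⋯ ≤ w(r)`. -/
def IsHook (w : List ℕ) : Prop :=
  ∃ a b rest, w = a :: b :: rest ∧ b < a ∧ List.Chain' (· ≤ ·) (b :: rest)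

/-- `w(i)` is a left-to-right maximum of `w` if `w(k) < w(i)` for all `k < i`. -/
def IsLRMax (w : List ℕ) (i : ℕ) : Prop := ∀ k < i, w.getD k 0 < w.getD i 0

instance (w : List ℕ) (i : ℕ) : Decidable (IsLRMax w i) := by
  unfold IsLRMax; infer_instance

/-- `mix w` counts the pairs of positions `i < j` such that either
`w(i) > w(j)` and `w(i)` is a left-to-right maximum, or `w(i) < w(j)` and
there is `k < i` with `w(k) > w(j)`. -/
def mix (w : List ℕ) : ℕ :=
  ((Finset.range w.length ×ˢ Finset.range w.length).filter fun p =>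
    p.1 < p.2 ∧ ((w.getD p.2 0 < w.getD p.1 0 ∧ IsLRMax w p.1) ∨
      (w.getD p.1 0 < w.getD p.2 0 ∧ ∃ k ∈ Finset.range p.1, w.getD p.2 0 < w.getD k 0))).card

/-- `das w` counts the positions `i` such that either `w(i) > w(i+1)` and
`w(i)` is a left-to-right maximum, or `w(i) < w(i+1)` and there is `k < i`
with `w(k) > w(i+1)`. -/
def das (w : List ℕ) : ℕ :=
  ((Finset.range (w.length - 1)).filter fun i =>
    (w.getD (i + 1) 0 < w.getD i 0 ∧ IsLRMax w i) ∨
      (w.getD i 0 < w.getD (i + 1) 0 ∧ ∃ k ∈ Finset.range i, w.getD (i + 1) 0 < w.getD k 0)).card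

/-- The values of the left-to-right maxima of a word, listed in increasing
order (which is also their order of occurrence). -/
def lrMaxima : List ℕ → List ℕ
  | [] => []
  | x :: xs => x :: lrMaxima (xs.filter fun a => decide (x < a))
termination_by l => l.length
decreasing_by
  have := xs.length_filter_le (fun a => decide (x < a))
  simp only [List.length_cons]
  simp only [List.length_unattach]
  exact Nat.lt_succ_of_le ((List.length_filter_le _ xs.attach).trans_eq List.length_attach)

/-- `Bset w m` is the list of entries of `w` that are smaller than `m` and lie
to the right of (the first occurrence of) `m` in `w`. -/
def Bset (w : List ℕ) (m : ℕ) : List ℕ :=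
  ((w.dropWhile fun a => decide (a ≠ m)).tail).filter fun a => decide (a < m)

/-- Helper for `psiS`: replace the letters satisfying `P`, in order, by the
letters of the first list. -/
def replaceSub (P : ℕ → Bool) : List ℕ → List ℕ → List ℕ
  | _, [] => []
  | rs, x :: xs =>
    if P x then rs.headD x :: replaceSub P rs.tail xs else x :: replaceSub P rs xs

/-- `psiS S w` is `ψ_S(w)`: the result of reversing, in place, the subword of
`w` consisting of the entries belonging to `S`. -/
def psiS (S : List ℕ) (w : List ℕ) : List ℕ :=
  replaceSub (fun a => decide (a ∈ S)) ((w.filter fun a => decide (a ∈ S)).reverse) w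

/-- Helper applying the alternating composition
`ψ_{B₁} ∘ ψ_{B₂ ∩ B₁} ∘ ψ_{B₂} ∘ ⋯ ∘ ψ_{B_{k-1}} ∘ ψ_{B_k ∩ B_{k-1}} ∘ ψ_{B_k}`
to `w`, given the list `[B_k, B_{k-1}, …, B₁]`. -/
def psiChain : List (List ℕ) → List ℕ → List ℕ
  | [], w => w
  | [B], w => psiS B w
  | B :: B' :: rest, w => psiChain (B' :: rest) (psiS (B.inter B') (psiS B w))

/-- The Brändén–Claesson bijection `ψ`. -/
def psi (w : List ℕ) : List ℕ :=
  psiChain (((lrMaxima w).map (Bset w)).reverse) w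

/-!
The hook factorization is read off from the right: a word that is not weakly increasing ends
in a hook, which becomes the last factor whatever stands in front of it. Peeling off the hooks
of `σ` in this way changes `kτ` and `kσ` only by the same trailing hooks, so one may assume `σ`
weakly increasing. Then `pix (kτ) = 0` forces `l` below `k` and below every letter of `σ`, so
`kτ` is a single hook whose inversions are those of `kσ` plus `(k, l)`; and `kσ`, being either
increasing or a hook, has `lec (kσ) = inv (kσ)`.
-/

lemma sum_range_length_ite_lt (a : ℕ) (w : List ℕ) :
    (∑ j ∈ Finset.range w.length, if w.getD j 0 < a then 1 else 0) = w.countP (· < a) := by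
  induction w with
  | nil => rfl
  | cons x w ih =>
    rw [List.length_cons, Finset.sum_range_succ', List.countP_cons]
    simp only [List.getD_cons_succ, List.getD_cons_zero, ih, decide_eq_true_eq]

lemma inv_cons (a : ℕ) (w : List ℕ) : inv (a :: w) = w.countP (· < a) + inv w := by
  simp only [inv, Finset.card_filter, Finset.sum_product, List.length_cons,
    Finset.sum_range_succ', List.getD_cons_succ, List.getD_cons_zero, false_and,
    if_false, Nat.not_lt_zero, Nat.add_lt_add_iff_right, Nat.zero_lt_succ, true_and, add_zero]
  rw [sum_range_length_ite_lt, add_comm]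

lemma inv_eq_zero_of_pairwise {w : List ℕ} (h : w.Pairwise (· ≤ ·)) : inv w = 0 := by
  induction w with
  | nil => rfl
  | cons a w ih =>
    rw [List.pairwise_cons] at h
    rw [inv_cons, ih h.2, List.countP_eq_zero.mpr fun b hb => by simpa using h.1 b hb]

lemma inv_cons_cons_of_lt {k l : ℕ} {w : List ℕ} (hlk : l < k) (hlw : ∀ a ∈ w, l < a) :
    inv (k :: l :: w) = 1 + inv (k :: w) := by
  have hw : w.countP (· < l) = 0 :=
    List.countP_eq_zero.mpr fun a ha => by simpa using (hlw a ha).le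
  simp only [inv_cons, List.countP_cons, hw, hlk, decide_true, if_true]
  omega

lemma decRun_cons_of_le {x : ℕ} {l : List ℕ} (hl : l ≠ []) (hx : ∀ y ∈ l.head?, y ≤ x) :
    decRun (x :: l) = (x :: (decRun l).1, (decRun l).2) := by
  obtain ⟨y, l, rfl⟩ := List.exists_cons_of_ne_nil hl
  rw [decRun, if_pos (hx y rfl)]

lemma decRun_of_isChain {r : List ℕ} (hr : r.IsChain (· ≥ ·)) : decRun r = (r, []) := by
  induction r with
  | nil => rfl
  | cons x r ih =>
    rcases r with _ | ⟨y, r⟩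
    · rfl
    · rw [List.isChain_cons_cons] at hr
      rw [decRun_cons_of_le (List.cons_ne_nil y r) (by simpa using hr.1), ih hr.2]

lemma decRun_append_cons_cons {d : List ℕ} {a b : ℕ} (hd : (d ++ [b]).IsChain (· ≥ ·))
    (hba : b < a) (t : List ℕ) : decRun (d ++ b :: a :: t) = (d ++ [b], a :: t) := by
  induction d with
  | nil => rw [List.nil_append, decRun, if_neg (by omega)]; rfl
  | cons x d ih =>
    rw [List.cons_append, List.isChain_cons] at hd
    have hx : ∀ y ∈ (d ++ b :: a :: t).head?, y ≤ x := by
      rcases d with _ | ⟨c, d⟩ <;> simpa using hd.1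
    rw [List.cons_append, decRun_cons_of_le (by simp) hx, ih hd.2, List.cons_append]

lemma hookRev_of_snd_nil {r : List ℕ} (h : (decRun r).2 = []) :
    hookRev r = (r.reverse, []) := by
  rw [hookRev.eq_def]
  split
  · rfl
  · simp_all

lemma hookRev_of_snd_cons {r : List ℕ} {z : ℕ} {t : List ℕ} (h : (decRun r).2 = z :: t) :
    hookRev r = ((hookRev t).1, (hookRev t).2 ++ [z :: (decRun r).1.reverse]) := by
  rw [hookRev.eq_def]
  split
  · simp_all
  · rename_i heq
    rw [h, List.cons.injEq] at heq
    obtain ⟨rfl, rfl⟩ := heq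
    rfl

lemma hookSplit_of_isChain {w : List ℕ} (hw : w.IsChain (· ≤ ·)) : hookSplit w = (w, []) := by
  have hd := decRun_of_isChain (List.isChain_reverse.mpr hw)
  rw [hookSplit, hookRev_of_snd_nil (by rw [hd]), List.reverse_reverse]

lemma hookSplit_append_of_isHook (u : List ℕ) {h : List ℕ} (hh : IsHook h) :
    hookSplit (u ++ h) = ((hookSplit u).1, (hookSplit u).2 ++ [h]) := by
  obtain ⟨a, b, t, rfl, hba, hbt⟩ := hh
  have hrun : (t.reverse ++ [b]).IsChain (· ≥ ·) := by
    rw [← List.reverse_cons, List.isChain_reverse]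
    exact hbt
  have hd := decRun_append_cons_cons hrun hba u.reverse
  have hrev : (u ++ a :: b :: t).reverse = t.reverse ++ b :: a :: u.reverse := by simp
  rw [hookSplit, hrev, hookRev_of_snd_cons (by rw [hd]), hd, hookSplit]
  simp

lemma hookSplit_of_isHook {w : List ℕ} (hw : IsHook w) : hookSplit w = ([], [w]) := by
  simpa [hookSplit_of_isChain List.IsChain.nil] using hookSplit_append_of_isHook [] hw

lemma lec_of_isHook {w : List ℕ} (hw : IsHook w) : lec w = inv w := by
  simp [lec, hookSplit_of_isHook hw]

lemma exists_eq_append_isHook {w : List ℕ} (hw : ¬ w.IsChain (· ≤ ·)) :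
    ∃ u h, w = u ++ h ∧ IsHook h := by
  induction w with
  | nil => exact absurd List.IsChain.nil hw
  | cons x w ih =>
    by_cases hc : w.IsChain (· ≤ ·)
    · obtain ⟨y, t, rfl⟩ : ∃ y t, w = y :: t := by
        rcases w with _ | ⟨y, t⟩
        · exact absurd (List.isChain_singleton _) hw
        · exact ⟨y, t, rfl⟩
      exact ⟨[], x :: y :: t, rfl, x, y, t, rfl,
        by simpa [List.isChain_cons_cons, hc] using hw, hc⟩
    · obtain ⟨u, h, rfl, hh⟩ := ih hc
      exact ⟨x :: u, h, rfl, hh⟩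

lemma exists_hookSplit_append (σ : List ℕ) :
    ∃ σ₀ hs, σ₀ <+: σ ∧ σ₀.IsChain (· ≤ ·) ∧
      ∀ u, hookSplit (u ++ σ) = ((hookSplit (u ++ σ₀)).1, (hookSplit (u ++ σ₀)).2 ++ hs) := by
  induction hn : σ.length using Nat.strong_induction_on generalizing σ with
  | _ n ih =>
    by_cases hc : σ.IsChain (· ≤ ·)
    · exact ⟨σ, [], List.prefix_refl σ, hc, by simp⟩
    obtain ⟨v, h, rfl, hh⟩ := exists_eq_append_isHook hc
    have hlen : v.length < n := by
      obtain ⟨a, b, t, rfl, -⟩ := hh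
      simp [← hn]
    obtain ⟨σ₀, hs, hpre, hσ₀, hsplit⟩ := ih _ hlen v rfl
    refine ⟨σ₀, hs ++ [h], hpre.trans (List.prefix_append v h), hσ₀, fun u => ?_⟩
    rw [← List.append_assoc, hookSplit_append_of_isHook _ hh, hsplit]
    simp

lemma lec_cons_of_isChain (k : ℕ) {σ : List ℕ} (hσ : σ.IsChain (· ≤ ·)) :
    lec (k :: σ) = inv (k :: σ) := by
  by_cases hk : (k :: σ).IsChain (· ≤ ·)
  · rw [inv_eq_zero_of_pairwise hk.pairwise, lec, hookSplit_of_isChain hk]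
    rfl
  · obtain ⟨y, t, rfl⟩ : ∃ y t, σ = y :: t := by
      rcases σ with _ | ⟨y, t⟩
      · exact absurd (List.isChain_singleton _) hk
      · exact ⟨y, t, rfl⟩
    exact lec_of_isHook ⟨k, y, t, rfl, by simpa [List.isChain_cons_cons, hσ] using hk, hσ⟩

lemma lec_cons_cons_of_isChain {k l : ℕ} {σ : List ℕ} (hσ : σ.IsChain (· ≤ ·)) (hl : l ∉ σ)
    (hkl : k ≠ l) (h0 : pix (k :: l :: σ) = 0) : lec (k :: l :: σ) = 1 + lec (k :: σ) := by
  have hlσ : (l :: σ).IsChain (· ≤ ·) := by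
    rcases σ with _ | ⟨y, t⟩
    · exact List.isChain_singleton l
    refine List.isChain_cons_cons.mpr ⟨?_, hσ⟩
    by_contra hyl
    have := hookSplit_append_of_isHook [k] ⟨l, y, t, rfl, by omega, hσ⟩
    rw [List.singleton_append] at this
    simp [pix, this, hookSplit_of_isChain (List.isChain_singleton k)] at h0
  have hlt : ∀ a ∈ σ, l < a := fun a ha =>
    lt_of_le_of_ne (List.rel_of_pairwise_cons hlσ.pairwise ha) fun h => hl (h ▸ ha)
  rcases lt_or_gt_of_ne hkl with hkl | hlk
  · have := hookSplit_of_isChain (hlσ.cons (by simpa using hkl.le))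
    simp [pix, this] at h0
  · rw [lec_of_isHook ⟨k, l, σ, rfl, hlk, hlσ⟩, lec_cons_of_isChain k hσ,
      inv_cons_cons_of_lt hlk hlt]

/-- If `τ = lσ` is nonempty with first letter `l`,
`k ∉ τ` and `pix(kτ) = 0`, then `lec(kτ) = 1 + lec(kσ)`. -/
theorem lec_cons_of_pix_cons_eq_zero (k l : ℕ) (σ : List ℕ)
    (hτ : (l :: σ).Nodup) (hk : k ∉ l :: σ) (h0 : pix (k :: l :: σ) = 0) :
    lec (k :: l :: σ) = 1 + lec (k :: σ) := by
  obtain ⟨σ₀, hs, hpre, hσ₀, hsplit⟩ := exists_hookSplit_append σ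
  have hl : l ∉ σ₀ := fun h => (List.nodup_cons.mp hτ).1 (hpre.subset h)
  have hkl : k ≠ l := fun h => hk (h ▸ List.mem_cons_self)
  have hsplit₂ := hsplit [k, l]
  have hsplit₁ := hsplit [k]
  simp only [List.cons_append, List.nil_append] at hsplit₂ hsplit₁
  rw [pix, hsplit₂] at h0
  have key := lec_cons_cons_of_isChain hσ₀ hl hkl h0
  simp only [lec, hsplit₂, hsplit₁, List.map_append, List.sum_append] at key ⊢
  omega

end PaperStats
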